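/- arXiv:1905.04183 — 3 statements merged into one kernel-verified Lean document; each statement's English description precedes it below -/
import Mathlib

section
/- If a two-dimensional integer configuration c is annihilated by a line polynomial in direction u ∈ ℤ² \ {0}, then c is periodic with period nu for some nonzero integer n. -/
/-!
On each line `v + ℤu` the configuration satisfies a linear recurrence whose extreme
coefficients are nonzero, so the line is determined, forwards and backwards, by any `d`
consecutive values, where `d` is the width of the support of `f`. With `K` values available
there are only `K ^ d` such windows, so two of the first `K ^ d + 1` windows coincide and the
line is `p`-periodic for some `0 < p ≤ K ^ d`. Hence `(K ^ d)!` is a period of every line.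
-/

lemma Finsupp.exists_support_subset_Icc {M : Type*} [Zero M] {a : ℤ →₀ M}
    (ha : a.support.Nonempty) :
    ∃ (m : ℤ) (d : ℕ), a.support ⊆ Finset.Icc m (m + d) ∧ a m ≠ 0 ∧ a (m + d) ≠ 0 := by
  have hle := a.support.min'_le_max' ha
  refine ⟨a.support.min' ha, (a.support.max' ha - a.support.min' ha).toNat,
    fun j hj => ?_, ?_, ?_⟩
  · have := a.support.min'_le j hj
    have := a.support.le_max' j hj
    rw [Finset.mem_Icc]
    omega
  · exact Finsupp.mem_support_iff.1 (a.support.min'_mem ha)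
  · rw [show a.support.min' ha + (a.support.max' ha - a.support.min' ha).toNat
      = a.support.max' ha by omega]
    exact Finsupp.mem_support_iff.1 (a.support.max'_mem ha)

section Recurrence

variable {R : Type*} [Ring R]

def Annihilates (a : ℤ →₀ R) (s : ℤ → R) : Prop :=
  ∀ k, ∑ j ∈ a.support, a j * s (k - j) = 0

namespace Annihilates

variable {a : ℤ →₀ R} {s s' : ℤ → R}

lemma sub (hs : Annihilates a s) (hs' : Annihilates a s') : Annihilates a (s - s') := by
  intro k
  simp only [Pi.sub_apply, mul_sub, Finset.sum_sub_distrib, hs k, hs' k, sub_zero]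

lemma comp_add_right (hs : Annihilates a s) (p : ℤ) : Annihilates a (fun k => s (k + p)) := by
  intro k
  simpa only [sub_add_eq_add_sub] using hs (k + p)

variable [NoZeroDivisors R]

lemma eq_zero_of_forall_ne (hs : Annihilates a s) {k j₀ : ℤ} (hj₀ : a j₀ ≠ 0)
    (h : ∀ j ∈ a.support, j ≠ j₀ → s (k - j) = 0) : s (k - j₀) = 0 := by
  have hk := hs k
  rw [Finset.sum_eq_single_of_mem j₀ (Finsupp.mem_support_iff.2 hj₀)
    fun j hj hne => by rw [h j hj hne, mul_zero]] at hk
  exact (mul_eq_zero.1 hk).resolve_left hj₀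

variable {m : ℤ} {d : ℕ}

lemma eq_zero_of_window (hs : Annihilates a s) (hsupp : a.support ⊆ Finset.Icc m (m + d))
    (hm : a m ≠ 0) (hM : a (m + d) ≠ 0) {t : ℤ}
    (hwin : ∀ i, t ≤ i → i < t + d → s i = 0) : s = 0 := by
  have hsupp' : ∀ j ∈ a.support, m ≤ j ∧ j ≤ m + d :=
    fun j hj => Finset.mem_Icc.1 (hsupp hj)
  let zeroOn (t : ℤ) : Prop := ∀ i, t ≤ i → i < t + d → s i = 0
  have next_up (t : ℤ) (ht : zeroOn t) : s (t + d) = 0 := by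
    simpa using hs.eq_zero_of_forall_ne (k := t + d + m) hm fun j hj _ =>
      have := hsupp' j hj
      ht _ (by omega) (by omega)
  have next_down (t : ℤ) (ht : zeroOn t) : s (t - 1) = 0 := by
    simpa using hs.eq_zero_of_forall_ne (k := t - 1 + (m + d)) hM fun j hj _ =>
      have := hsupp' j hj
      ht _ (by omega) (by omega)
  have hall (n : ℤ) : zeroOn (t + n) := by
    induction n using Int.induction_on with
    | zero => simpa using hwin
    | succ n ih =>
      intro i hi₁ hi₂
      rcases lt_or_ge i (t + n + d) with h | h
      · exact ih i (by omega) h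
      · obtain rfl : i = t + n + d := by omega
        exact next_up _ ih
    | pred n ih =>
      intro i hi₁ hi₂
      rcases lt_or_ge i (t - n) with h | h
      · obtain rfl : i = t - n - 1 := by omega
        simpa [sub_eq_add_neg] using next_down _ ih
      · exact ih i (by omega) (by omega)
  funext i
  simpa using next_up _ (hall (i - d - t))

lemma periodic_of_window (hs : Annihilates a s) (hsupp : a.support ⊆ Finset.Icc m (m + d))
    (hm : a m ≠ 0) (hM : a (m + d) ≠ 0) {t p : ℤ}
    (hwin : ∀ i, t ≤ i → i < t + d → s (i + p) = s i) : Function.Periodic s p := by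
  have h := ((hs.comp_add_right p).sub hs).eq_zero_of_window hsupp hm hM
    fun i h₁ h₂ => sub_eq_zero.2 (hwin i h₁ h₂)
  exact fun i => sub_eq_zero.1 (congrFun h i)

lemma exists_periodic (hs : Annihilates a s) (hsupp : a.support ⊆ Finset.Icc m (m + d))
    (hm : a m ≠ 0) (hM : a (m + d) ≠ 0) (S : Finset R) (hS : ∀ k, s k ∈ S) :
    ∃ p : ℕ, 0 < p ∧ p ≤ S.card ^ d ∧ Function.Periodic s p := by
  have hmaps : Set.MapsTo (fun (k : ℕ) (i : Fin d) => s (k + i))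
      (Finset.range (S.card ^ d + 1) : Set ℕ)
      (Fintype.piFinset fun _ => S : Finset (Fin d → R)) :=
    fun k _ => Fintype.mem_piFinset.2 fun i => hS _
  have hcard :
      (Fintype.piFinset fun _ : Fin d => S).card < (Finset.range (S.card ^ d + 1)).card := by
    simp [Fintype.card_piFinset]
  obtain ⟨k₁, hk₁, k₂, hk₂, hne, heq⟩ :=
    Finset.exists_ne_map_eq_of_card_lt_of_maps_to hcard hmaps
  wlog hlt : k₁ < k₂ generalizing k₁ k₂
  · exact this k₂ hk₂ k₁ hk₁ hne.symm heq.symm (by omega)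
  rw [Finset.mem_range] at hk₁ hk₂
  refine ⟨k₂ - k₁, by omega, by omega,
    hs.periodic_of_window hsupp hm hM (t := k₁) fun i h₁ h₂ => ?_⟩
  have h := congrFun heq ⟨(i - k₁).toNat, by omega⟩
  rw [show (k₁ : ℤ) + ((i - k₁).toNat : ℕ) = i by omega,
    show (k₂ : ℤ) + ((i - k₁).toNat : ℕ) = i + ((k₂ - k₁ : ℕ) : ℤ) by omega] at h
  exact h.symm

lemma periodic_factorial (hs : Annihilates a s) (hsupp : a.support ⊆ Finset.Icc m (m + d))
    (hm : a m ≠ 0) (hM : a (m + d) ≠ 0) (S : Finset R) (hS : ∀ k, s k ∈ S) :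
    Function.Periodic s ((S.card ^ d).factorial : ℕ) := by
  obtain ⟨p, hp, hpS, hper⟩ := hs.exists_periodic hsupp hm hM S hS
  obtain ⟨q, hq⟩ := Nat.dvd_factorial hp hpS
  rw [hq, Nat.cast_mul, mul_comm]
  exact hper.nat_mul q

end Annihilates

lemma annihilates_comapDomain_smul {G : Type*} [AddCommGroup G] {f : G →₀ R} {u : G}
    (hu : Function.Injective (· • u : ℤ → G)) (hline : ∀ w ∈ f.support, ∃ n : ℤ, w = n • u)
    {g : G → R} (hann : ∀ v, ∑ w ∈ f.support, f w * g (v - w) = 0) (v : G) :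
    Annihilates (f.comapDomain (· • u) hu.injOn) (fun k => g (v + k • u)) := by
  intro k
  have hsum := Finset.sum_preimage (· • u) f.support hu.injOn
    (fun w => f w * g (v + k • u - w))
    fun w hw hw' => absurd (hline w hw) (by simpa [eq_comm] using hw')
  simp only [Finsupp.comapDomain_support, Finsupp.comapDomain_apply, sub_smul]
  rw [← hann (v + k • u), ← hsum]
  simp only [add_sub_assoc]

end Recurrence

/-- If a two-dimensional configuration `c : ℤ² → ℤ` with finite image is
annihilated by a line polynomial in direction `u ≠ 0` (a Laurent polynomial
whose support has at least two elements and is contained in `ℤu`), then `c` is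
`n·u`-periodic for some nonzero integer `n`. -/
theorem line_polynomial_annihilator_implies_periodic (c : ℤ × ℤ → ℤ)
    (hc : (Set.range c).Finite) (u : ℤ × ℤ) (hu : u ≠ 0)
    (f : (ℤ × ℤ) →₀ ℂ)
    (hsupp2 : 2 ≤ f.support.card)
    (hline : ∀ v ∈ f.support, ∃ n : ℤ, v = n • u)
    (hann : ∀ v, ∑ w ∈ f.support, f w * (c (v - w) : ℂ) = 0) :
    ∃ n : ℤ, n ≠ 0 ∧ ∀ v, c (v - n • u) = c v := by
  classical
  have hinj : Function.Injective (· • u : ℤ → ℤ × ℤ) := smul_left_injective ℤ hu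
  set a := f.comapDomain (· • u) hinj.injOn
  have ha : a.support.Nonempty := by
    obtain ⟨w, hw⟩ := Finset.card_pos.1 (by omega : 0 < f.support.card)
    obtain ⟨n, rfl⟩ := hline w hw
    exact ⟨n, by simpa [a] using hw⟩
  obtain ⟨m, d, hsupp, hm, hM⟩ := Finsupp.exists_support_subset_Icc ha
  set S := hc.toFinset.image (Int.cast : ℤ → ℂ)
  refine ⟨(S.card ^ d).factorial, by positivity, fun v => ?_⟩
  have hlineAnn := annihilates_comapDomain_smul hinj hline (g := fun w => (c w : ℂ)) hann v
  have hper := hlineAnn.periodic_factorial hsupp hm hM S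
    fun k => Finset.mem_image_of_mem _ (hc.mem_toFinset.2 (Set.mem_range_self (v + k • u)))
  have h := hper.sub_eq 0
  simp only [zero_sub, neg_smul, zero_smul, add_zero, ← sub_eq_add_neg] at h
  exact_mod_cast h
end

section
/- Let A = 𝔽₂ and f = 1 + x₁ + x₂. If a configuration c : ℤ² → 𝔽₂ satisfies f·c = 0 (i.e., c lies in the Ledrappier subshift) and c is also annihilated by a nonzero Laurent polynomial g ∈ 𝔽₂[x₁^{±1}, x₂^{±1}] all of whose irreducible factors are line polynomials, then c is two-periodic. -/
/-!
Write `x = x₁`, `y = x₂` and `f = 1 + x + y`. Modulo `f` we have `y ≡ -1 - x`, so after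
multiplication by a monomial `(xy)ⁿ` every Laurent polynomial is congruent to a polynomial in `x`
alone, and symmetrically in `y` alone. Parametrizing the curve `f = 0` by `x ↦ t`, `y ↦ -1 - t`
shows that `(f)` is the kernel of a map to the field `k(t)`, so `f` is prime; not being a line
polynomial, it cannot divide `g`. Hence the annihilator of `c`, which contains `f` and `g`, contains
a nonzero `h(x)`. Over a finite field `h` divides some `xˢ⁺ᵀ - xˢ`, which makes `c` periodic along
`e₁`; the same argument with `y` gives the second period.
-/

/-- Multiplication of a configuration `c : ℤ² → 𝔽₂` by a Laurent polynomial
`g ∈ 𝔽₂[x₁^{±1}, x₂^{±1}]` (an element of the group algebra of `ℤ²`):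
`(g·c)(u) = Σ_v g_v · c(u - v)`, computed in `𝔽₂`. -/
def mulConfig (g : AddMonoidAlgebra (ZMod 2) (ℤ × ℤ)) (c : ℤ × ℤ → ZMod 2) :
    ℤ × ℤ → ZMod 2 :=
  fun u => ∑ v ∈ g.coeff.support, g.coeff v * c (u - v)

/-- A line polynomial: its support has at least two elements and is contained
in `ℤw` for some `w ∈ ℤ²`. -/
def IsLinePoly (q : AddMonoidAlgebra (ZMod 2) (ℤ × ℤ)) : Prop :=
  2 ≤ q.coeff.support.card ∧ ∃ w : ℤ × ℤ, ∀ v ∈ q.coeff.support, ∃ n : ℤ, v = n • w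

open AddMonoidAlgebra Polynomial

noncomputable def ledrappierPoly (k : Type*) [Semiring k] : k[ℤ × ℤ] :=
  1 + single (1, 0) 1 + single (0, 1) 1

variable {k : Type*}

section CommSemiring

variable [CommSemiring k]

theorem coeff_ledrappierPoly_one_zero : (ledrappierPoly k).coeff (1, 0) = 1 := by
  simp [ledrappierPoly, one_def]

theorem coeff_ledrappierPoly_zero_one : (ledrappierPoly k).coeff (0, 1) = 1 := by
  simp [ledrappierPoly, one_def]

theorem isUnit_single_one (v : ℤ × ℤ) : IsUnit (single v (1 : k)) :=
  (Group.isUnit (Multiplicative.ofAdd v)).map (of k _)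

theorem single_natCast_pair (i j : ℕ) (r : k) :
    single ((i : ℤ), (j : ℤ)) r =
      algebraMap k k[ℤ × ℤ] r * single (1, 0) 1 ^ i * single (0, 1) 1 ^ j := by
  simp [single_pow, single_mul_single]

variable {A : Type*} [Semiring A] [Algebra k A] (φ : k[ℤ × ℤ] →ₐ[k] A) {S : Subalgebra k A}

theorem map_single_natCast_pair_mem (h₁ : φ (single (1, 0) 1) ∈ S) (h₂ : φ (single (0, 1) 1) ∈ S)
    (i j : ℕ) (r : k) : φ (single ((i : ℤ), (j : ℤ)) r) ∈ S := by
  rw [single_natCast_pair, map_mul, map_mul, map_pow, map_pow, AlgHom.commutes]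
  exact S.mul_mem (S.mul_mem (S.algebraMap_mem r) (S.pow_mem h₁ i)) (S.pow_mem h₂ j)

theorem exists_map_single_diag_mul_mem (h₁ : φ (single (1, 0) 1) ∈ S)
    (h₂ : φ (single (0, 1) 1) ∈ S) (g : k[ℤ × ℤ]) :
    ∃ n : ℕ, φ (single ((n : ℤ), (n : ℤ)) 1 * g) ∈ S := by
  have hdiag (m : ℕ) (x : k[ℤ × ℤ]) (hx : φ x ∈ S) :
      φ (single ((m : ℤ), (m : ℤ)) 1 * x) ∈ S := by
    rw [map_mul]
    exact S.mul_mem (map_single_natCast_pair_mem φ h₁ h₂ _ _ _) hx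
  induction g using AddMonoidAlgebra.induction_linear with
  | zero => exact ⟨0, by simp⟩
  | add g₁ g₂ ih₁ ih₂ =>
    obtain ⟨n₁, hn₁⟩ := ih₁
    obtain ⟨n₂, hn₂⟩ := ih₂
    refine ⟨n₁ + n₂, ?_⟩
    have hsplit : single (((n₁ + n₂ : ℕ) : ℤ), ((n₁ + n₂ : ℕ) : ℤ)) (1 : k) * (g₁ + g₂) =
        single ((n₂ : ℤ), (n₂ : ℤ)) 1 * (single ((n₁ : ℤ), (n₁ : ℤ)) 1 * g₁) +
          single ((n₁ : ℤ), (n₁ : ℤ)) 1 * (single ((n₂ : ℤ), (n₂ : ℤ)) 1 * g₂) := by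
      simp only [← mul_assoc, single_mul_single, Prod.mk_add_mk, mul_one]
      push_cast
      ring_nf
    rw [hsplit, map_add]
    exact S.add_mem (hdiag _ _ hn₁) (hdiag _ _ hn₂)
  | single v r =>
    obtain ⟨a, b⟩ := v
    set n := a.natAbs + b.natAbs
    refine ⟨n, ?_⟩
    have hv : single ((n : ℤ), (n : ℤ)) (1 : k) * single (a, b) r =
        single ((((n + a).toNat : ℕ) : ℤ), (((n + b).toNat : ℕ) : ℤ)) r := by
      rw [single_mul_single, one_mul, Int.toNat_of_nonneg (by omega),
        Int.toNat_of_nonneg (by omega)]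
      rfl
    rw [hv]
    exact map_single_natCast_pair_mem φ h₁ h₂ _ _ _

end CommSemiring

section CommRing

variable [CommRing k]

theorem exists_single_diag_mul_sub_aeval_mem_span (g : k[ℤ × ℤ]) {w : ℤ × ℤ}
    (hw : w = (1, 0) ∨ w = (0, 1)) : ∃ (n : ℕ) (h : k[X]),
      single ((n : ℤ), (n : ℤ)) 1 * g - aeval (single w 1) h ∈ Ideal.span {ledrappierPoly k} := by
  set π := Ideal.Quotient.mkₐ k (Ideal.span {ledrappierPoly k})
  have hf : 1 + π (single (1, 0) 1) + π (single (0, 1) 1) = 0 := by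
    rw [← map_one π, ← map_add, ← map_add]
    exact Ideal.Quotient.eq_zero_iff_mem.mpr (Ideal.subset_span rfl)
  set S := (aeval (R := k) (π (single w 1))).range
  have hself : π (single w 1) ∈ S := ⟨X, aeval_X _⟩
  have hneg : -1 ∈ S := neg_mem (one_mem S)
  have hgen : π (single (1, 0) 1) ∈ S ∧ π (single (0, 1) 1) ∈ S := by
    rcases hw with rfl | rfl
    · refine ⟨hself, ?_⟩
      rw [show π (single (0, 1) 1) = -1 - π (single (1, 0) 1) by linear_combination hf]
      exact sub_mem hneg hself
    · refine ⟨?_, hself⟩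
      rw [show π (single (1, 0) 1) = -1 - π (single (0, 1) 1) by linear_combination hf]
      exact sub_mem hneg hself
  obtain ⟨n, hn⟩ := exists_map_single_diag_mul_mem π hgen.1 hgen.2 g
  obtain ⟨h, hh⟩ := (AlgHom.mem_range _).mp hn
  rw [aeval_algHom_apply] at hh
  exact ⟨n, h, Ideal.Quotient.eq.mp hh.symm⟩

end CommRing

section Field

variable [Field k]

noncomputable def ledrappierParam : k[ℤ × ℤ] →ₐ[k] RatFunc k :=
  lift k (RatFunc k) (ℤ × ℤ) <| (Units.coeHom (RatFunc k)).comp <|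
    ((zpowersHom _ (Units.mk0 RatFunc.X RatFunc.X_ne_zero)).coprod
      (zpowersHom _ (-Units.mk0 (algebraMap k[X] (RatFunc k) (X + C 1))
        ((map_ne_zero_iff _ (RatFunc.algebraMap_injective k)).mpr (X_add_C_ne_zero 1))))).comp
      (MulEquiv.prodMultiplicative ℤ ℤ).toMonoidHom

theorem ledrappierParam_single_one_zero :
    ledrappierParam (single (1, 0) (1 : k)) = RatFunc.X := by
  simp [ledrappierParam]

theorem ledrappierParam_single_zero_one :
    ledrappierParam (single (0, 1) (1 : k)) = -1 - RatFunc.X := by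
  simp [ledrappierParam, sub_eq_add_neg]

theorem ledrappierParam_ledrappierPoly : ledrappierParam (ledrappierPoly k) = 0 := by
  rw [ledrappierPoly, map_add, map_add, map_one, ledrappierParam_single_one_zero,
    ledrappierParam_single_zero_one]
  ring

theorem ledrappierParam_aeval_single_one_zero (h : k[X]) :
    ledrappierParam (aeval (single (1, 0) 1) h) = algebraMap k[X] (RatFunc k) h := by
  rw [← aeval_algHom_apply, ledrappierParam_single_one_zero, ← RatFunc.algebraMap_X,
    aeval_algebraMap_apply, aeval_X_left_apply]

theorem ker_ledrappierParam :
    RingHom.ker (ledrappierParam (k := k)) = Ideal.span {ledrappierPoly k} := by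
  have hle : Ideal.span {ledrappierPoly k} ≤ RingHom.ker (ledrappierParam (k := k)) :=
    Ideal.span_le.mpr (Set.singleton_subset_iff.mpr ledrappierParam_ledrappierPoly)
  refine le_antisymm (fun g hg => ?_) hle
  obtain ⟨n, h, hmem⟩ := exists_single_diag_mul_sub_aeval_mem_span g (Or.inl rfl)
  have hh := RingHom.mem_ker.mp (hle hmem)
  rw [map_sub, map_mul, RingHom.mem_ker.mp hg, mul_zero, zero_sub, neg_eq_zero,
    ledrappierParam_aeval_single_one_zero,
    map_eq_zero_iff _ (RatFunc.algebraMap_injective k)] at hh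
  rw [hh, map_zero, sub_zero, Ideal.mem_span_singleton, (isUnit_single_one _).dvd_mul_left]
    at hmem
  exact Ideal.mem_span_singleton.mpr hmem

theorem ledrappierPoly_ne_zero : ledrappierPoly k ≠ 0 := fun h => by
  simpa [h] using coeff_ledrappierPoly_one_zero (k := k)

theorem prime_ledrappierPoly : Prime (ledrappierPoly k) :=
  (Ideal.span_singleton_prime ledrappierPoly_ne_zero).mp
    (ker_ledrappierParam (k := k) ▸ RingHom.ker_isPrime _)

end Field

theorem Polynomial.exists_dvd_X_pow_add_sub_X_pow [Field k] [Finite k] {h : k[X]} (hh : h ≠ 0) :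
    ∃ s T : ℕ, 0 < T ∧ h ∣ X ^ (s + T) - X ^ s := by
  have : Module.Finite k (AdjoinRoot h) := (AdjoinRoot.powerBasis hh).finite
  have : Finite (AdjoinRoot h) := Module.finite_of_finite k
  obtain ⟨i, j, hne, hij⟩ := Finite.exists_ne_map_eq_of_infinite (AdjoinRoot.root h ^ · : ℕ → _)
  wlog hlt : i < j generalizing i j
  · exact this j i hne.symm hij.symm (by omega)
  refine ⟨i, j - i, by omega, ?_⟩
  rw [← AdjoinRoot.mk_eq_zero, map_sub, map_pow, map_pow, AdjoinRoot.mk_X,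
    Nat.add_sub_cancel' hlt.le, hij, sub_self]

section Configurations

variable (c : ℤ × ℤ → ZMod 2)

theorem mulConfig_zero_left : mulConfig 0 c = 0 := by
  funext u; simp [mulConfig]

theorem mulConfig_zero_right (g : (ZMod 2)[ℤ × ℤ]) : mulConfig g 0 = 0 := by
  funext u; simp [mulConfig]

theorem mulConfig_apply (g : (ZMod 2)[ℤ × ℤ]) (u : ℤ × ℤ) :
    mulConfig g c u = g.coeff.sum fun v r => r * c (u - v) :=
  rfl

theorem mulConfig_add (p q : (ZMod 2)[ℤ × ℤ]) :
    mulConfig (p + q) c = mulConfig p c + mulConfig q c := by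
  funext u
  simp only [mulConfig_apply, Pi.add_apply, AddMonoidAlgebra.coeff_add]
  exact Finsupp.sum_add_index' (by simp) (by intros; ring)

theorem mulConfig_single (v : ℤ × ℤ) (r : ZMod 2) :
    mulConfig (single v r) c = fun u => r * c (u - v) := by
  funext u
  rw [mulConfig_apply, coeff_single]
  exact Finsupp.sum_single_index (by simp)

theorem mulConfig_mul (p q : (ZMod 2)[ℤ × ℤ]) :
    mulConfig (p * q) c = mulConfig p (mulConfig q c) := by
  induction p using AddMonoidAlgebra.induction_linear with
  | zero => simp [mulConfig_zero_left]
  | add p₁ p₂ ih₁ ih₂ => simp only [add_mul, mulConfig_add, ih₁, ih₂]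
  | single v r =>
    induction q using AddMonoidAlgebra.induction_linear with
    | zero => simp [mulConfig_zero_left, mulConfig_zero_right]
    | add q₁ q₂ ih₁ ih₂ =>
      rw [mul_add, mulConfig_add, ih₁, ih₂, mulConfig_add, mulConfig_single, mulConfig_single,
        mulConfig_single]
      funext u
      simp [mul_add]
    | single w s =>
      simp only [single_mul_single, mulConfig_single, sub_add_eq_sub_sub]
      funext u
      ring

def configAnnihilator : Ideal (ZMod 2)[ℤ × ℤ] where
  carrier := {g | mulConfig g c = 0}
  zero_mem' := mulConfig_zero_left c
  add_mem' {p q} (hp : mulConfig p c = 0) (hq : mulConfig q c = 0) := by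
    show mulConfig (p + q) c = 0
    rw [mulConfig_add, hp, hq, add_zero]
  smul_mem' p q (hq : mulConfig q c = 0) := by
    show mulConfig (p * q) c = 0
    rw [mulConfig_mul, hq, mulConfig_zero_right]

theorem mem_configAnnihilator {g : (ZMod 2)[ℤ × ℤ]} :
    g ∈ configAnnihilator c ↔ mulConfig g c = 0 :=
  Iff.rfl

variable {c}

theorem ledrappierPoly_mem_configAnnihilator
    (hled : ∀ u : ℤ × ℤ, c u = c (u - (1, 0)) + c (u - (0, 1))) :
    ledrappierPoly (ZMod 2) ∈ configAnnihilator c := by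
  funext u
  simp only [ledrappierPoly, one_def, mulConfig_add, mulConfig_single, Pi.add_apply, one_mul,
    sub_zero, Pi.zero_apply]
  rw [hled u]
  grind

theorem apply_sub_eq_of_single_sub_single_mem {a b : ℤ × ℤ}
    (h : single a 1 - single b 1 ∈ configAnnihilator c) (u : ℤ × ℤ) :
    c (u - a) = c (u - b) := by
  rw [mem_configAnnihilator, sub_eq_add_neg, ← single_neg, mulConfig_add, mulConfig_single,
    mulConfig_single] at h
  have hu := congrFun h u
  simp only [Pi.add_apply, Pi.zero_apply] at hu
  linear_combination hu

theorem exists_nsmul_period_of_not_dvd {g : (ZMod 2)[ℤ × ℤ]}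
    (hf : ledrappierPoly (ZMod 2) ∈ configAnnihilator c) (hg : g ∈ configAnnihilator c)
    (hfg : ¬ ledrappierPoly (ZMod 2) ∣ g) {w : ℤ × ℤ} (hw : w = (1, 0) ∨ w = (0, 1)) :
    ∃ T : ℕ, 0 < T ∧ ∀ v, c (v - T • w) = c v := by
  obtain ⟨n, h, hmem⟩ := exists_single_diag_mul_sub_aeval_mem_span g hw
  have hh : h ≠ 0 := by
    rintro rfl
    rw [map_zero, sub_zero, Ideal.mem_span_singleton, (isUnit_single_one _).dvd_mul_left] at hmem
    exact hfg hmem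
  have hspan : Ideal.span {ledrappierPoly (ZMod 2)} ≤ configAnnihilator c :=
    Ideal.span_le.mpr (Set.singleton_subset_iff.mpr hf)
  have hhc : aeval (single w 1) h ∈ configAnnihilator c := by
    simpa only [sub_sub_cancel] using
      sub_mem (Ideal.mul_mem_left _ (single ((n : ℤ), (n : ℤ)) 1) hg) (hspan hmem)
  obtain ⟨s, T, hT, q, hq⟩ := exists_dvd_X_pow_add_sub_X_pow hh
  have hperiod : single ((s + T) • w) 1 - single (s • w) 1 ∈ configAnnihilator c := by
    have := Ideal.mul_mem_right (aeval (single w 1) q) _ hhc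
    rwa [← map_mul, ← hq, map_sub, map_pow, map_pow, aeval_X, single_pow, single_pow, one_pow,
      one_pow] at this
  refine ⟨T, hT, fun v => ?_⟩
  have := apply_sub_eq_of_single_sub_single_mem hperiod (v + s • w)
  rwa [add_smul, sub_add_eq_sub_sub, add_sub_cancel_right] at this

end Configurations

theorem not_isLinePoly_ledrappierPoly : ¬ IsLinePoly (ledrappierPoly (ZMod 2)) := by
  rintro ⟨-, w, hw⟩
  obtain ⟨n, hn⟩ := hw (1, 0) (by simp [coeff_ledrappierPoly_one_zero])
  obtain ⟨m, hm⟩ := hw (0, 1) (by simp [coeff_ledrappierPoly_zero_one])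
  simp only [Prod.ext_iff, Prod.smul_fst, Prod.smul_snd, smul_eq_mul] at hn hm
  have : (1 : ℤ) = 0 := by linear_combination hm.2 + m * w.2 * hn.1 - m * w.1 * hn.2
  exact one_ne_zero this

theorem linearIndependent_nsmul_pair {T₁ T₂ : ℕ} (h₁ : 0 < T₁) (h₂ : 0 < T₂) :
    LinearIndependent ℤ ![T₁ • ((1 : ℤ), (0 : ℤ)), T₂ • ((0 : ℤ), (1 : ℤ))] := by
  rw [LinearIndependent.pair_iff]
  intro a b hab
  simp only [Prod.smul_mk, Int.nsmul_eq_mul, mul_one, nsmul_zero, Int.zsmul_eq_mul, mul_zero,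
    Prod.mk_add_mk, add_zero, zero_add, Prod.ext_iff, Prod.fst_zero, Prod.snd_zero, mul_eq_zero,
    Int.natCast_eq_zero] at hab
  omega

theorem ledrappier_low_complexity_two_periodic_general (c : ℤ × ℤ → ZMod 2)
    (hled : ∀ u : ℤ × ℤ, c u = c (u - (1, 0)) + c (u - (0, 1)))
    (g : AddMonoidAlgebra (ZMod 2) (ℤ × ℤ))
    (hfac : ∀ q : AddMonoidAlgebra (ZMod 2) (ℤ × ℤ),
      Irreducible q → q ∣ g → IsLinePoly q)
    (hann : mulConfig g c = 0) :
    ∃ t₁ t₂ : ℤ × ℤ, LinearIndependent ℤ ![t₁, t₂] ∧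
      (∀ v, c (v - t₁) = c v) ∧ (∀ v, c (v - t₂) = c v) := by
  have hf := ledrappierPoly_mem_configAnnihilator hled
  have hfg : ¬ ledrappierPoly (ZMod 2) ∣ g := fun hdvd =>
    not_isLinePoly_ledrappierPoly (hfac _ prime_ledrappierPoly.irreducible hdvd)
  obtain ⟨T₁, hT₁, h₁⟩ := exists_nsmul_period_of_not_dvd hf hann hfg (Or.inl rfl)
  obtain ⟨T₂, hT₂, h₂⟩ := exists_nsmul_period_of_not_dvd hf hann hfg (Or.inr rfl)
  exact ⟨T₁ • (1, 0), T₂ • (0, 1), linearIndependent_nsmul_pair hT₁ hT₂, h₁, h₂⟩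

/-- If a configuration in the Ledrappier subshift (annihilated by
`f = 1 + x₁ + x₂`, i.e. `c(u) = c(u - e₁) + c(u - e₂)`) is also annihilated by
a nonzero Laurent polynomial all of whose irreducible factors are line
polynomials, then `c` is two-periodic. -/
theorem ledrappier_low_complexity_two_periodic (c : ℤ × ℤ → ZMod 2)
    (hled : ∀ u : ℤ × ℤ, c u = c (u - (1, 0)) + c (u - (0, 1)))
    (g : AddMonoidAlgebra (ZMod 2) (ℤ × ℤ)) (hg : g ≠ 0)
    (hfac : ∀ q : AddMonoidAlgebra (ZMod 2) (ℤ × ℤ),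
      Irreducible q → q ∣ g → IsLinePoly q)
    (hann : mulConfig g c = 0) :
    ∃ t₁ t₂ : ℤ × ℤ, LinearIndependent ℤ ![t₁, t₂] ∧
      (∀ v, c (v - t₁) = c v) ∧ (∀ v, c (v - t₂) = c v) :=
  ledrappier_low_complexity_two_periodic_general c hled g hfac hann
end

section
/- If a nonzero Laurent polynomial f ∈ ℂ[x^{±1}] in one variable annihilates a one-dimensional configuration c : ℤ → ℤ with finite image, then c is periodic: there exists n > 0 with c(u + n) = c(u) for all u ∈ ℤ. -/
/-- If a nonzero one-variable Laurent polynomial over `ℂ` annihilates a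
configuration `c : ℤ → ℤ` with finite image, then `c` is periodic. -/
theorem one_dimensional_annihilated_is_periodic (c : ℤ → ℤ)
    (hc : (Set.range c).Finite) (f : ℤ →₀ ℂ) (hf : f ≠ 0)
    (hann : ∀ u : ℤ, ∑ v ∈ f.support, f v * (c (u - v) : ℂ) = 0) :
    ∃ n : ℤ, 0 < n ∧ ∀ u, c (u + n) = c u := by
  have hs : f.support.Nonempty := Finsupp.support_nonempty_iff.mpr hf
  set M := f.support.max' hs with hM
  set m := f.support.min' hs with hm
  have hmM : m ≤ M := f.support.min'_le M (f.support.max'_mem hs)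
  set L : ℤ := M - m with hL
  have hL0 : 0 ≤ L := by omega
  -- key cancellation lemma: the single recurrence equation, solved at coefficient `w`
  have key0 : ∀ (w : ℤ), w ∈ f.support → ∀ x y : ℤ,
      (∀ v ∈ f.support, v ≠ w → c (x + M - v) = c (y + M - v)) →
      c (x + M - w) = c (y + M - w) := by
    intro w hw x y h
    have h3 : ∑ v ∈ f.support, f v * ((c (x + M - v) : ℂ) - (c (y + M - v) : ℂ)) = 0 := by
      have h1 := hann (x + M)
      have h2 := hann (y + M)
      simp only [mul_sub, Finset.sum_sub_distrib]
      rw [h1, h2, sub_zero]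
    have h4 : f w * ((c (x + M - w) : ℂ) - (c (y + M - w) : ℂ)) = 0 := by
      have h4' : ∑ v ∈ f.support, f v * ((c (x + M - v) : ℂ) - (c (y + M - v) : ℂ)) =
          f w * ((c (x + M - w) : ℂ) - (c (y + M - w) : ℂ)) :=
        Finset.sum_eq_single_of_mem w hw fun v hv hvw => by
          rw [h v hv hvw, sub_self, mul_zero]
      rw [← h4', h3]
    have hfw : f w ≠ 0 := Finsupp.mem_support_iff.mp hw
    rcases mul_eq_zero.mp h4 with h5 | h5
    · exact absurd h5 hfw
    · exact_mod_cast sub_eq_zero.mp h5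
  -- forward determinacy
  have fwd : ∀ x y : ℤ, (∀ i : ℤ, 0 ≤ i → i < L → c (x + i) = c (y + i)) →
      c (x + L) = c (y + L) := by
    intro x y h
    have hkey := key0 m (f.support.min'_mem hs) x y ?_
    · have e1 : x + M - m = x + L := by omega
      have e2 : y + M - m = y + L := by omega
      rwa [e1, e2] at hkey
    · intro v hv hvm
      have h1 : m ≤ v := f.support.min'_le v hv
      have h2 : v ≤ M := f.support.le_max' v hv
      have e1 : x + M - v = x + (M - v) := by ring
      have e2 : y + M - v = y + (M - v) := by ring
      rw [e1, e2]
      exact h (M - v) (by omega) (by omega)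
  -- backward determinacy
  have bwd : ∀ x y : ℤ, (∀ i : ℤ, 0 < i → i ≤ L → c (x + i) = c (y + i)) →
      c x = c y := by
    intro x y h
    have hkey := key0 M (f.support.max'_mem hs) x y ?_
    · have e1 : x + M - M = x := by ring
      have e2 : y + M - M = y := by ring
      rwa [e1, e2] at hkey
    · intro v hv hvM
      have h1 : m ≤ v := f.support.min'_le v hv
      have h2 : v ≤ M := f.support.le_max' v hv
      have e1 : x + M - v = x + (M - v) := by ring
      have e2 : y + M - v = y + (M - v) := by ring
      rw [e1, e2]
      exact h (M - v) (by omega) (by omega)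
  rcases eq_or_lt_of_le hL0 with hLz | hLpos
  · -- degenerate case L = 0 : c is constant
    refine ⟨1, one_pos, fun u => ?_⟩
    have h := fwd (u + 1) u (fun i h1 h2 => absurd (h1.trans_lt h2) (by omega))
    have e1 : u + 1 + L = u + 1 := by omega
    have e2 : u + L = u := by omega
    rwa [e1, e2] at h
  · -- propagation: equal windows force global equality
    have prop : ∀ x y : ℤ, (∀ i : ℤ, 0 ≤ i → i < L → c (x + i) = c (y + i)) →
        ∀ t : ℤ, c (x + t) = c (y + t) := by
      intro x y hw
      have fwdall : ∀ n : ℕ, ∀ i : ℤ, 0 ≤ i → i < L →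
          c (x + (n : ℤ) + i) = c (y + (n : ℤ) + i) := by
        intro n
        induction n with
        | zero => simpa using hw
        | succ n ih =>
          intro i h1 h2
          rcases lt_or_eq_of_le (show i + 1 ≤ L by omega) with h3 | h3
          · have h4 := ih (i + 1) (by omega) h3
            have e1 : x + (n : ℤ) + (i + 1) = x + ((n : ℤ) + 1) + i := by ring
            have e2 : y + (n : ℤ) + (i + 1) = y + ((n : ℤ) + 1) + i := by ring
            rw [e1, e2] at h4
            have ec : ((n : ℤ) + 1) = ((n + 1 : ℕ) : ℤ) := by push_cast; ring
            rwa [ec] at h4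
          · have h4 := fwd (x + n) (y + n) ih
            have e1 : x + (n : ℤ) + L = x + ((n : ℤ) + 1) + i := by omega
            have e2 : y + (n : ℤ) + L = y + ((n : ℤ) + 1) + i := by omega
            rw [e1, e2] at h4
            have ec : ((n : ℤ) + 1) = ((n + 1 : ℕ) : ℤ) := by push_cast; ring
            rwa [ec] at h4
      have bwdall : ∀ n : ℕ, ∀ i : ℤ, 0 ≤ i → i < L →
          c (x - (n : ℤ) + i) = c (y - (n : ℤ) + i) := by
        intro n
        induction n with
        | zero => simpa using hw
        | succ n ih =>
          intro i h1 h2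
          have ec : ((n + 1 : ℕ) : ℤ) = (n : ℤ) + 1 := by push_cast; ring
          rw [ec]
          rcases lt_or_eq_of_le h1 with h3 | h3
          · have h4 := ih (i - 1) (by omega) (by omega)
            have e1 : x - (n : ℤ) + (i - 1) = x - ((n : ℤ) + 1) + i := by ring
            have e2 : y - (n : ℤ) + (i - 1) = y - ((n : ℤ) + 1) + i := by ring
            rwa [e1, e2] at h4
          · -- i = 0
            have h4 := bwd (x - ((n : ℤ) + 1)) (y - ((n : ℤ) + 1)) ?_
            · have e1 : x - ((n : ℤ) + 1) + i = x - ((n : ℤ) + 1) := by omega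
              have e2 : y - ((n : ℤ) + 1) + i = y - ((n : ℤ) + 1) := by omega
              rwa [e1, e2]
            · intro j hj1 hj2
              have h5 := ih (j - 1) (by omega) (by omega)
              have e1 : x - (n : ℤ) + (j - 1) = x - ((n : ℤ) + 1) + j := by ring
              have e2 : y - (n : ℤ) + (j - 1) = y - ((n : ℤ) + 1) + j := by ring
              rwa [e1, e2] at h5
      intro t
      rcases le_or_gt 0 t with ht | ht
      · have h4 := fwdall t.toNat 0 le_rfl hLpos
        have e1 : x + (t.toNat : ℤ) + 0 = x + t := by omega
        have e2 : y + (t.toNat : ℤ) + 0 = y + t := by omega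
        rwa [e1, e2] at h4
      · have h4 := bwdall (-t).toNat 0 le_rfl hLpos
        have e1 : x - ((-t).toNat : ℤ) + 0 = x + t := by omega
        have e2 : y - ((-t).toNat : ℤ) + 0 = y + t := by omega
        rwa [e1, e2] at h4
    -- pigeonhole on windows
    haveI : Finite (Set.range c) := hc.to_subtype
    set k := L.toNat with hk
    let g : ℕ → (Fin k → Set.range c) :=
      fun n i => ⟨c ((n : ℤ) + (i : ℤ)), Set.mem_range_self _⟩
    obtain ⟨a, b, hab, hg⟩ := Finite.exists_ne_map_eq_of_infinite g
    have hwin : ∀ i : ℤ, 0 ≤ i → i < L → c ((a : ℤ) + i) = c ((b : ℤ) + i) := by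
      intro i h1 h2
      have hi : i.toNat < k := by omega
      have h3 := Subtype.ext_iff.mp (congrFun hg ⟨i.toNat, hi⟩)
      simpa [g, Int.toNat_of_nonneg h1] using h3
    have hall := prop a b hwin
    rcases lt_or_gt_of_ne hab with h | h
    · refine ⟨(b : ℤ) - a, by omega, fun u => ?_⟩
      have h4 := hall (u - a)
      have e1 : (a : ℤ) + (u - a) = u := by ring
      have e2 : (b : ℤ) + (u - a) = u + ((b : ℤ) - a) := by ring
      rw [e1, e2] at h4
      exact h4.symm
    · refine ⟨(a : ℤ) - b, by omega, fun u => ?_⟩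
      have h4 := hall (u - b)
      have e1 : (b : ℤ) + (u - b) = u := by ring
      have e2 : (a : ℤ) + (u - b) = u + ((a : ℤ) - b) := by ring
      rw [e1, e2] at h4
      exact h4
end
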